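/- arXiv:2503.23651 — 2 statements merged into one kernel-verified Lean document; each statement's English description precedes it below -/
import Mathlib

section
/- The face group F(X, x₀) of any based simplicial complex (X, x₀) is abelian: for any two face spheres f and g in (X, x₀), the products f·g and g·f are extension-contiguity equivalent. -/
structure ASC (V : Type) where
  faces : Set (Finset V)
  down_closed : ∀ ⦃s t : Finset V⦄, s ∈ faces → t ⊆ s → t ∈ faces

variable {U V W : Type}

/-- A vertex map is a simplicial map if it sends every simplex to a simplex. -/
def IsSimplicialMap [DecidableEq W] (K : ASC V) (L : ASC W) (f : V → W) : Prop :=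
  ∀ s ∈ K.faces, s.image f ∈ L.faces

/-- Two maps are contiguous if `f(σ) ∪ g(σ)` is a simplex for every simplex `σ`. -/
def Contiguous [DecidableEq W] (K : ASC V) (L : ASC W) (f g : V → W) : Prop :=
  ∀ s ∈ K.faces, s.image f ∪ s.image g ∈ L.faces

/-- Contiguity equivalence: a finite chain of contiguities through simplicial maps. -/
def ContigEquiv [DecidableEq W] (K : ASC V) (L : ASC W) : (V → W) → (V → W) → Prop :=
  Relation.ReflTransGen (fun a b =>
    IsSimplicialMap K L a ∧ IsSimplicialMap K L b ∧ Contiguous K L a b)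

/-- The categorical product of simplicial complexes. -/
def ASC.prod [DecidableEq V] [DecidableEq W] (K : ASC V) (L : ASC W) : ASC (V × W) where
  faces := {s | s.image Prod.fst ∈ K.faces ∧ s.image Prod.snd ∈ L.faces}
  down_closed := fun _s _t hs hts =>
    ⟨K.down_closed hs.1 (Finset.image_subset_image hts),
     L.down_closed hs.2 (Finset.image_subset_image hts)⟩

/-- The simplicial interval `I_m` on vertices `0, …, m`. -/
def interval (m : ℕ) : ASC ℕ where
  faces := {s | (∀ x ∈ s, x ≤ m) ∧ ∀ x ∈ s, ∀ y ∈ s, x ≤ y + 1}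
  down_closed := fun _s _t hs hts =>
    ⟨fun x hx => hs.1 x (hts hx), fun x hx y hy => hs.2 x (hts hx) y (hts hy)⟩

/-- The vertex map of `α_i : I_{m+1} → I_m`. -/
def alpha (i : ℕ) : ℕ → ℕ := fun s => if s ≤ i then s else s - 1

/-- The categorical product `I_m × I_n`. -/
def prodInterval (m n : ℕ) : ASC (ℕ × ℕ) := (interval m).prod (interval n)

/-- A face sphere: a simplicial map `(I_m × I_n, ∂(I_m × I_n)) → (X, x₀)`. -/
def IsFaceSphere [DecidableEq V] (X : ASC V) (x₀ : V) (m n : ℕ) (f : ℕ × ℕ → V) : Prop :=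
  IsSimplicialMap (prodInterval m n) X f ∧
  ∀ p : ℕ × ℕ, p.1 ≤ m → p.2 ≤ n →
    (p.1 = 0 ∨ p.1 = m ∨ p.2 = 0 ∨ p.2 = n) → f p = x₀

/-- Contiguity equivalence of face spheres, relative the boundary. -/
def FaceContigEquiv [DecidableEq V] (X : ASC V) (x₀ : V) (m n : ℕ) :
    (ℕ × ℕ → V) → (ℕ × ℕ → V) → Prop :=
  Relation.ReflTransGen (fun a b =>
    IsFaceSphere X x₀ m n a ∧ IsFaceSphere X x₀ m n b ∧
      Contiguous (prodInterval m n) X a b)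

/-- The trivial extension `f ∘ (α_m^r × α_n^s)`. -/
def trivExt (m n r s : ℕ) (f : ℕ × ℕ → V) : ℕ × ℕ → V :=
  f ∘ Prod.map ((alpha m)^[r]) ((alpha n)^[s])

/-- Extension-contiguity equivalence of face spheres of possibly different sizes. -/
def ExtContigEquiv [DecidableEq V] (X : ASC V) (x₀ : V) (m n : ℕ) (f : ℕ × ℕ → V)
    (m' n' : ℕ) (g : ℕ × ℕ → V) : Prop :=
  ∃ M N, m ≤ M ∧ m' ≤ M ∧ n ≤ N ∧ n' ≤ N ∧
    FaceContigEquiv X x₀ M N (trivExt m n (M - m) (N - n) f)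
      (trivExt m' n' (M - m') (N - n') g)

/-- The product `f · g` of face spheres: `f` in the lower-left block,
a translate of `g` in the upper-right block, basepoint elsewhere. -/
def fsMul (x₀ : V) (m n : ℕ) (f g : ℕ × ℕ → V) : ℕ × ℕ → V := fun p =>
  if p.1 ≤ m ∧ p.2 ≤ n then f p
  else if m + 1 ≤ p.1 ∧ n + 1 ≤ p.2 then g (p.1 - (m + 1), p.2 - (n + 1))
  else x₀

/-!
Both `f · g` and `g · f` place a copy of `f` and a copy of `g` diagonally in the same
`(m + r + 1) × (n + s + 1)` rectangle, so it suffices to exchange the two blocks. View the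
product as the overlay of two blocks, each a face sphere precomposed with clamped translations of
the coordinates. A block moves by one row through a chain of contiguities that shift its rows one
at a time, and likewise for columns. While the other block stays two columns (or rows) away from
the moving block's interior, no simplex meets both, so these contiguities pass to the overlay.
Sliding `g` down, `f` up, `f` right and `g` left turns `f · g` into `g · f`.
-/

open Finset Relation

section Simplicial

variable {U' W' : Type} {K : ASC U} {L : ASC W} {X : ASC V}

theorem contiguous_self_iff [DecidableEq W] {f : U → W} :
    Contiguous K L f f ↔ IsSimplicialMap K L f := by
  simp only [Contiguous, IsSimplicialMap, union_self]

theorem Contiguous.symm [DecidableEq W] {f g : U → W} (h : Contiguous K L f g) :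
    Contiguous K L g f := fun s hs => union_comm (s.image f) _ ▸ h s hs

theorem Contiguous.comp_left [DecidableEq W] [DecidableEq V] {a b : U → W} {f : W → V}
    (h : Contiguous K L a b) (hf : IsSimplicialMap L X f) : Contiguous K X (f ∘ a) (f ∘ b) := by
  intro s hs
  rw [← image_image, ← image_image (g := f), ← image_union]
  exact hf _ (h s hs)

theorem Contiguous.prodMap [DecidableEq U] [DecidableEq W] [DecidableEq U'] [DecidableEq W']
    {K' : ASC U'} {L' : ASC W'} {a a' : U → U'} {b b' : W → W'}
    (ha : Contiguous K K' a a') (hb : Contiguous L L' b b') :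
    Contiguous (K.prod L) (K'.prod L') (Prod.map a b) (Prod.map a' b') := by
  rintro s ⟨h1, h2⟩
  refine ⟨?_, ?_⟩
  · simpa only [image_union, image_image, Prod.map_fst'] using ha _ h1
  · simpa only [image_union, image_image, Prod.map_snd'] using hb _ h2

def overlay [DecidableEq V] (x₀ : V) (F G : U → V) : U → V :=
  fun p => if F p = x₀ then G p else F p

variable [DecidableEq V] {x₀ : V} {F F' G G' : U → V} {p : U}

theorem overlay_eq_right (h : F p = x₀) : overlay x₀ F G p = G p := if_pos h

theorem overlay_eq_left (h : G p = x₀) : overlay x₀ F G p = F p := by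
  unfold overlay
  split_ifs with hF
  · rw [hF, h]
  · rfl

theorem overlay_comm_apply (h : F p = x₀ ∨ G p = x₀) :
    overlay x₀ F G p = overlay x₀ G F p := by
  rcases h with h | h
  · rw [overlay_eq_right h, overlay_eq_left h]
  · rw [overlay_eq_left h, overlay_eq_right h]

theorem Contiguous.overlay (hF : Contiguous K X F F') (hG : Contiguous K X G G')
    (hsep : ∀ s ∈ K.faces, (∀ p ∈ s, F p = x₀ ∧ F' p = x₀) ∨ ∀ p ∈ s, G p = x₀ ∧ G' p = x₀) :
    Contiguous K X (overlay x₀ F G) (overlay x₀ F' G') := by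
  intro s hs
  rcases hsep s hs with h | h
  · rw [image_congr fun p hp => overlay_eq_right (h p hp).1,
      image_congr fun p hp => overlay_eq_right (h p hp).2]
    exact hG s hs
  · rw [image_congr fun p hp => overlay_eq_left (h p hp).1,
      image_congr fun p hp => overlay_eq_left (h p hp).2]
    exact hF s hs

end Simplicial

section Profiles

theorem contiguous_interval_of {L v : ℕ} {h h' : ℕ → ℕ} (hle : ∀ y, h y ≤ v ∧ h' y ≤ v)
    (hadj : ∀ y z, y ≤ z + 1 → z ≤ y + 1 →
      h y ≤ h z + 1 ∧ h y ≤ h' z + 1 ∧ h' y ≤ h z + 1 ∧ h' y ≤ h' z + 1) :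
    Contiguous (interval L) (interval v) h h' := by
  rintro s ⟨-, hs⟩
  refine ⟨fun x hx => ?_, fun x hx x' hx' => ?_⟩
  · simp only [mem_union, mem_image] at hx
    rcases hx with ⟨y, -, rfl⟩ | ⟨y, -, rfl⟩
    exacts [(hle y).1, (hle y).2]
  · simp only [mem_union, mem_image] at hx hx'
    rcases hx with ⟨y, hy, rfl⟩ | ⟨y, hy, rfl⟩ <;> rcases hx' with ⟨z, hz, rfl⟩ | ⟨z, hz, rfl⟩ <;>
      have := hadj y z (hs y hy z hz) (hs z hz y hy) <;> omega

/-- A profile `I_L → I_v` reparametrizes one side of a face sphere. -/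
structure IsProfile (v L : ℕ) (h : ℕ → ℕ) : Prop where
  le : ∀ y, h y ≤ v
  map_zero : h 0 = 0
  map_top : h L = v
  isSimplicialMap : IsSimplicialMap (interval L) (interval v) h

theorem IsProfile.contiguous_self {v L : ℕ} {h : ℕ → ℕ} (hh : IsProfile v L h) :
    Contiguous (interval L) (interval v) h h :=
  contiguous_self_iff.2 hh.isSimplicialMap

/-- The profile of a side of length `v` placed at offset `a`. -/
def clampSub (v a y : ℕ) : ℕ := min (y - a) v

/-- Halfway between `clampSub v (a + 1)` (for `j = a`) and `clampSub v a` (for `a + v ≤ j`):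
rows up to `j` are already at offset `a`. -/
def clampSubStep (v a j y : ℕ) : ℕ := clampSub v (if y ≤ j then a else a + 1) y

variable {v L a j : ℕ}

theorem clampSub_le (y : ℕ) : clampSub v a y ≤ v := min_le_right _ _

theorem isProfile_clampSub (h : a + v ≤ L) : IsProfile v L (clampSub v a) := by
  refine ⟨clampSub_le, by simp [clampSub], by simp only [clampSub]; omega,
    contiguous_self_iff.1 (contiguous_interval_of (fun y => ⟨clampSub_le y, clampSub_le y⟩)
      fun y z _ _ => ?_)⟩
  simp only [clampSub]
  omega

theorem isProfile_clampSubStep (h : a + v < L) : IsProfile v L (clampSubStep v a j) := by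
  refine ⟨fun y => clampSub_le y, ?_, ?_,
    contiguous_self_iff.1 (contiguous_interval_of (fun y => ⟨clampSub_le y, clampSub_le y⟩)
      fun y z _ _ => ?_)⟩ <;>
  simp only [clampSubStep, clampSub] <;> split_ifs <;> omega

theorem contiguous_clampSubStep_succ :
    Contiguous (interval L) (interval v) (clampSubStep v a j) (clampSubStep v a (j + 1)) :=
  contiguous_interval_of (fun y => ⟨clampSub_le y, clampSub_le y⟩) fun y z _ _ => by
    simp only [clampSubStep, clampSub]
    split_ifs <;> omega

theorem clampSubStep_self : clampSubStep v a a = clampSub v (a + 1) := by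
  funext y
  simp only [clampSubStep, clampSub]
  split_ifs <;> omega

theorem clampSubStep_of_le (h : a + v ≤ j) : clampSubStep v a j = clampSub v a := by
  funext y
  simp only [clampSubStep, clampSub]
  split_ifs <;> omega

end Profiles

section FaceSpheres

def GridAdj (p q : ℕ × ℕ) : Prop :=
  p.1 ≤ q.1 + 1 ∧ q.1 ≤ p.1 + 1 ∧ p.2 ≤ q.2 + 1 ∧ q.2 ≤ p.2 + 1

variable {M N m n r s : ℕ} {σ : Finset (ℕ × ℕ)} {p q : ℕ × ℕ}

theorem le_of_mem_prodInterval (hσ : σ ∈ (prodInterval M N).faces) (hp : p ∈ σ) :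
    p.1 ≤ M ∧ p.2 ≤ N :=
  ⟨hσ.1.1 _ (mem_image_of_mem _ hp), hσ.2.1 _ (mem_image_of_mem _ hp)⟩

theorem gridAdj_of_mem_prodInterval (hσ : σ ∈ (prodInterval M N).faces) (hp : p ∈ σ)
    (hq : q ∈ σ) : GridAdj p q :=
  have h1 := hσ.1.2 _ (mem_image_of_mem Prod.fst hp)
  have h2 := hσ.2.2 _ (mem_image_of_mem Prod.snd hp)
  have h1' := hσ.1.2 _ (mem_image_of_mem Prod.fst hq)
  have h2' := hσ.2.2 _ (mem_image_of_mem Prod.snd hq)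
  ⟨h1 _ (mem_image_of_mem _ hq), h1' _ (mem_image_of_mem _ hp),
    h2 _ (mem_image_of_mem _ hq), h2' _ (mem_image_of_mem _ hp)⟩

theorem trivExt_zero (f : ℕ × ℕ → V) : trivExt m n 0 0 f = f := rfl

variable [DecidableEq V] {X : ASC V} {x₀ : V} {f g A B F F' G G' : ℕ × ℕ → V}

def FaceContigStep (X : ASC V) (x₀ : V) (M N : ℕ) (a b : ℕ × ℕ → V) : Prop :=
  IsFaceSphere X x₀ M N a ∧ IsFaceSphere X x₀ M N b ∧ Contiguous (prodInterval M N) X a b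

theorem faceContigEquiv_symm (h : FaceContigEquiv X x₀ M N A B) :
    FaceContigEquiv X x₀ M N B A := by
  induction h with
  | refl => exact .refl
  | tail _ hst ih => exact (ReflTransGen.single ⟨hst.2.1, hst.1, hst.2.2.symm⟩).trans ih

theorem faceContigEquiv_of_eqOn (hA : IsFaceSphere X x₀ M N A)
    (hAB : ∀ p : ℕ × ℕ, p.1 ≤ M → p.2 ≤ N → A p = B p) : FaceContigEquiv X x₀ M N A B := by
  have himage : ∀ σ ∈ (prodInterval M N).faces, σ.image A = σ.image B := fun σ hσ =>
    image_congr fun p hp =>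
      hAB p (le_of_mem_prodInterval hσ hp).1 (le_of_mem_prodInterval hσ hp).2
  have hB : IsFaceSphere X x₀ M N B :=
    ⟨fun σ hσ => himage σ hσ ▸ hA.1 σ hσ, fun p h1 h2 h3 => hAB p h1 h2 ▸ hA.2 p h1 h2 h3⟩
  exact .single ⟨hA, hB, fun σ hσ => by rw [himage σ hσ, union_self]; exact hB.1 σ hσ⟩

theorem faceContigEquiv_of_succ {Φ : ℕ → ℕ × ℕ → V} {a b : ℕ} (hab : a ≤ b)
    (h : ∀ i, a ≤ i → i < b → FaceContigEquiv X x₀ M N (Φ i) (Φ (i + 1))) :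
    FaceContigEquiv X x₀ M N (Φ a) (Φ b) := by
  induction b, hab using Nat.le_induction with
  | base => exact .refl
  | succ b hab ih => exact (ih fun i h1 h2 => h i h1 (by omega)).trans (h b hab (by omega))

theorem IsFaceSphere.contiguous_comp_prodMap {φ φ' ψ ψ' : ℕ → ℕ}
    (hf : IsFaceSphere X x₀ m n f) (hφ : Contiguous (interval M) (interval m) φ φ')
    (hψ : Contiguous (interval N) (interval n) ψ ψ') :
    Contiguous (prodInterval M N) X (f ∘ Prod.map φ ψ) (f ∘ Prod.map φ' ψ') :=
  (hφ.prodMap hψ).comp_left hf.1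

theorem IsFaceSphere.comp_prodMap {φ ψ : ℕ → ℕ} (hf : IsFaceSphere X x₀ m n f)
    (hφ : IsProfile m M φ) (hψ : IsProfile n N ψ) :
    IsFaceSphere X x₀ M N (f ∘ Prod.map φ ψ) := by
  refine ⟨contiguous_self_iff.1 (hf.contiguous_comp_prodMap hφ.contiguous_self
    hψ.contiguous_self), fun p _ _ hp => hf.2 (φ p.1, ψ p.2) (hφ.le _) (hψ.le _) ?_⟩
  rcases hp with h | h | h | h <;> simp [h, hφ.map_zero, hφ.map_top, hψ.map_zero, hψ.map_top]

theorem IsFaceSphere.comp_prodMap_clampSub_fst {a : ℕ} {ψ : ℕ → ℕ}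
    (hf : IsFaceSphere X x₀ m n f) (hψ : ∀ y, ψ y ≤ n) (hp : p.1 ≤ a ∨ a + m ≤ p.1) :
    (f ∘ Prod.map (clampSub m a) ψ) p = x₀ :=
  hf.2 _ (clampSub_le _) (hψ _) (by simp only [Prod.map_fst, clampSub]; omega)

theorem IsFaceSphere.comp_prodMap_clampSub_snd {a : ℕ} {φ : ℕ → ℕ}
    (hf : IsFaceSphere X x₀ m n f) (hφ : ∀ x, φ x ≤ m) (hp : p.2 ≤ a ∨ a + n ≤ p.2) :
    (f ∘ Prod.map φ (clampSub n a)) p = x₀ :=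
  hf.2 _ (hφ _) (clampSub_le _) (by simp only [Prod.map_snd, clampSub]; omega)

theorem contiguous_overlay_prodInterval (hF : Contiguous (prodInterval M N) X F F')
    (hG : Contiguous (prodInterval M N) X G G')
    (hsep : ∀ p q, GridAdj p q → (F p = x₀ ∧ F' p = x₀) ∨ (G q = x₀ ∧ G' q = x₀)) :
    Contiguous (prodInterval M N) X (overlay x₀ F G) (overlay x₀ F' G') := by
  refine hF.overlay hG fun σ hσ => or_iff_not_imp_left.2 fun h q hq => ?_
  obtain ⟨p, hp, hFp⟩ : ∃ p ∈ σ, ¬(F p = x₀ ∧ F' p = x₀) := by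
    simpa only [not_forall, exists_prop] using h
  exact (hsep p q (gridAdj_of_mem_prodInterval hσ hp hq)).resolve_left hFp

theorem faceContigStep_overlay (hF : IsFaceSphere X x₀ M N F) (hF' : IsFaceSphere X x₀ M N F')
    (hG : IsFaceSphere X x₀ M N G) (hG' : IsFaceSphere X x₀ M N G')
    (hFF' : Contiguous (prodInterval M N) X F F') (hGG' : Contiguous (prodInterval M N) X G G')
    (hsep : ∀ p q, GridAdj p q → (F p = x₀ ∧ F' p = x₀) ∨ (G q = x₀ ∧ G' q = x₀)) :
    FaceContigStep X x₀ M N (overlay x₀ F G) (overlay x₀ F' G') := by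
  have hface : ∀ {F G}, IsFaceSphere X x₀ M N F → IsFaceSphere X x₀ M N G →
      (∀ p q, GridAdj p q → F p = x₀ ∨ G q = x₀) → IsFaceSphere X x₀ M N (overlay x₀ F G) :=
    fun hF hG hsep => ⟨contiguous_self_iff.1 <| contiguous_overlay_prodInterval
        (contiguous_self_iff.2 hF.1) (contiguous_self_iff.2 hG.1)
        fun p q hpq => (hsep p q hpq).imp (fun h => ⟨h, h⟩) fun h => ⟨h, h⟩,
      fun p h1 h2 h3 => overlay_eq_right (hF.2 p h1 h2 h3) ▸ hG.2 p h1 h2 h3⟩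
  exact ⟨hface hF hG fun p q hpq => (hsep p q hpq).imp And.left And.left,
    hface hF' hG' fun p q hpq => (hsep p q hpq).imp And.right And.right,
    contiguous_overlay_prodInterval hFF' hGG' hsep⟩

end FaceSpheres

section Commutativity

variable [DecidableEq V] {X : ASC V} {x₀ : V} {M N m n r s : ℕ} {f g : ℕ × ℕ → V}

theorem faceContigStep_overlay_of_fst {a b : ℕ} {φ φ' ψ ψ' : ℕ → ℕ}
    (hf : IsFaceSphere X x₀ m n f) (hg : IsFaceSphere X x₀ r s g)
    (hab : a + m ≤ b) (hbM : b + r ≤ M)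
    (hφ : IsProfile n N φ) (hφ' : IsProfile n N φ')
    (hφφ' : Contiguous (interval N) (interval n) φ φ')
    (hψ : IsProfile s N ψ) (hψ' : IsProfile s N ψ')
    (hψψ' : Contiguous (interval N) (interval s) ψ ψ') :
    FaceContigStep X x₀ M N
      (overlay x₀ (f ∘ Prod.map (clampSub m a) φ) (g ∘ Prod.map (clampSub r b) ψ))
      (overlay x₀ (f ∘ Prod.map (clampSub m a) φ') (g ∘ Prod.map (clampSub r b) ψ')) := by
  have ha : IsProfile m M (clampSub m a) := isProfile_clampSub (by omega)
  have hb : IsProfile r M (clampSub r b) := isProfile_clampSub hbM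
  refine faceContigStep_overlay (hf.comp_prodMap ha hφ) (hf.comp_prodMap ha hφ')
    (hg.comp_prodMap hb hψ) (hg.comp_prodMap hb hψ')
    (hf.contiguous_comp_prodMap ha.contiguous_self hφφ')
    (hg.contiguous_comp_prodMap hb.contiguous_self hψψ') fun p q hpq => ?_
  by_cases hp : p.1 ≤ a ∨ a + m ≤ p.1
  · exact .inl ⟨hf.comp_prodMap_clampSub_fst hφ.le hp,
      hf.comp_prodMap_clampSub_fst hφ'.le hp⟩
  · have hq : q.1 ≤ b := by have := hpq.2.1; omega
    exact .inr ⟨hg.comp_prodMap_clampSub_fst hψ.le (.inl hq),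
      hg.comp_prodMap_clampSub_fst hψ'.le (.inl hq)⟩

theorem faceContigStep_overlay_of_snd {a b : ℕ} {φ φ' ψ ψ' : ℕ → ℕ}
    (hf : IsFaceSphere X x₀ m n f) (hg : IsFaceSphere X x₀ r s g)
    (hba : b + s ≤ a) (haN : a + n ≤ N)
    (hφ : IsProfile m M φ) (hφ' : IsProfile m M φ')
    (hφφ' : Contiguous (interval M) (interval m) φ φ')
    (hψ : IsProfile r M ψ) (hψ' : IsProfile r M ψ')
    (hψψ' : Contiguous (interval M) (interval r) ψ ψ') :
    FaceContigStep X x₀ M N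
      (overlay x₀ (f ∘ Prod.map φ (clampSub n a)) (g ∘ Prod.map ψ (clampSub s b)))
      (overlay x₀ (f ∘ Prod.map φ' (clampSub n a)) (g ∘ Prod.map ψ' (clampSub s b))) := by
  have ha : IsProfile n N (clampSub n a) := isProfile_clampSub haN
  have hb : IsProfile s N (clampSub s b) := isProfile_clampSub (by omega)
  refine faceContigStep_overlay (hf.comp_prodMap hφ ha) (hf.comp_prodMap hφ' ha)
    (hg.comp_prodMap hψ hb) (hg.comp_prodMap hψ' hb)
    (hf.contiguous_comp_prodMap hφφ' ha.contiguous_self)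
    (hg.contiguous_comp_prodMap hψψ' hb.contiguous_self) fun p q hpq => ?_
  by_cases hp : p.2 ≤ a ∨ a + n ≤ p.2
  · exact .inl ⟨hf.comp_prodMap_clampSub_snd hφ.le hp,
      hf.comp_prodMap_clampSub_snd hφ'.le hp⟩
  · have hq : b + s ≤ q.2 := by have := hpq.2.2.1; omega
    exact .inr ⟨hg.comp_prodMap_clampSub_snd hψ.le (.inr hq),
      hg.comp_prodMap_clampSub_snd hψ'.le (.inr hq)⟩

theorem faceContigEquiv_slide {v L : ℕ} {Φ : (ℕ → ℕ) → ℕ × ℕ → V}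
    (hΦ : ∀ h h', IsProfile v L h → IsProfile v L h' →
      Contiguous (interval L) (interval v) h h' → FaceContigStep X x₀ M N (Φ h) (Φ h'))
    {a b : ℕ} (ha : a + v ≤ L) (hb : b + v ≤ L) :
    FaceContigEquiv X x₀ M N (Φ (clampSub v a)) (Φ (clampSub v b)) := by
  wlog hab : a ≤ b generalizing a b
  · exact faceContigEquiv_symm (this hb ha (by omega))
  refine faceContigEquiv_of_succ (Φ := fun c => Φ (clampSub v c)) hab fun c _ hc => ?_
  have hstep := faceContigEquiv_of_succ (Φ := fun j => Φ (clampSubStep v c j))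
    (Nat.le_add_right c v) fun j _ _ => .single <| hΦ _ _ (isProfile_clampSubStep (by omega))
      (isProfile_clampSubStep (by omega)) contiguous_clampSubStep_succ
  simp only [clampSubStep_self, clampSubStep_of_le le_rfl] at hstep
  exact faceContigEquiv_symm hstep

theorem faceContigEquiv_overlay_exchange_snd (hf : IsFaceSphere X x₀ m n f)
    (hg : IsFaceSphere X x₀ r s g) :
    FaceContigEquiv X x₀ (m + r + 1) (n + s + 1)
      (overlay x₀ (f ∘ Prod.map (clampSub m 0) (clampSub n 0))
        (g ∘ Prod.map (clampSub r (m + 1)) (clampSub s (n + 1))))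
      (overlay x₀ (f ∘ Prod.map (clampSub m 0) (clampSub n (s + 1)))
        (g ∘ Prod.map (clampSub r (m + 1)) (clampSub s 0))) := by
  have hφ : IsProfile n (n + s + 1) (clampSub n 0) := isProfile_clampSub (by omega)
  have hψ : IsProfile s (n + s + 1) (clampSub s 0) := isProfile_clampSub (by omega)
  have slide_g_down := faceContigEquiv_slide (M := m + r + 1) (N := n + s + 1)
    (Φ := fun k => overlay x₀ (f ∘ Prod.map (clampSub m 0) (clampSub n 0))
      (g ∘ Prod.map (clampSub r (m + 1)) k))
    (fun k k' hk hk' hkk' => faceContigStep_overlay_of_fst hf hg (by omega) (by omega)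
      hφ hφ hφ.contiguous_self hk hk' hkk') (a := n + 1) (b := 0) (by omega) (by omega)
  have slide_f_up := faceContigEquiv_slide (M := m + r + 1) (N := n + s + 1)
    (Φ := fun k => overlay x₀ (f ∘ Prod.map (clampSub m 0) k)
      (g ∘ Prod.map (clampSub r (m + 1)) (clampSub s 0)))
    (fun k k' hk hk' hkk' => faceContigStep_overlay_of_fst hf hg (by omega) (by omega)
      hk hk' hkk' hψ hψ hψ.contiguous_self) (a := 0) (b := s + 1) (by omega) (by omega)
  exact slide_g_down.trans slide_f_up

theorem faceContigEquiv_overlay_exchange_fst (hf : IsFaceSphere X x₀ m n f)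
    (hg : IsFaceSphere X x₀ r s g) :
    FaceContigEquiv X x₀ (m + r + 1) (n + s + 1)
      (overlay x₀ (f ∘ Prod.map (clampSub m 0) (clampSub n (s + 1)))
        (g ∘ Prod.map (clampSub r (m + 1)) (clampSub s 0)))
      (overlay x₀ (f ∘ Prod.map (clampSub m (r + 1)) (clampSub n (s + 1)))
        (g ∘ Prod.map (clampSub r 0) (clampSub s 0))) := by
  have hφ : IsProfile m (m + r + 1) (clampSub m (r + 1)) := isProfile_clampSub (by omega)
  have hψ : IsProfile r (m + r + 1) (clampSub r (m + 1)) := isProfile_clampSub (by omega)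
  have slide_f_right := faceContigEquiv_slide (M := m + r + 1) (N := n + s + 1)
    (Φ := fun k => overlay x₀ (f ∘ Prod.map k (clampSub n (s + 1)))
      (g ∘ Prod.map (clampSub r (m + 1)) (clampSub s 0)))
    (fun k k' hk hk' hkk' => faceContigStep_overlay_of_snd hf hg (by omega) (by omega)
      hk hk' hkk' hψ hψ hψ.contiguous_self) (a := 0) (b := r + 1) (by omega) (by omega)
  have slide_g_left := faceContigEquiv_slide (M := m + r + 1) (N := n + s + 1)
    (Φ := fun k => overlay x₀ (f ∘ Prod.map (clampSub m (r + 1)) (clampSub n (s + 1)))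
      (g ∘ Prod.map k (clampSub s 0)))
    (fun k k' hk hk' hkk' => faceContigStep_overlay_of_snd hf hg (by omega) (by omega)
      hφ hφ hφ.contiguous_self hk hk' hkk') (a := m + 1) (b := 0) (by omega) (by omega)
  exact slide_f_right.trans slide_g_left

theorem fsMul_eq_overlay (hf : IsFaceSphere X x₀ m n f) (hg : IsFaceSphere X x₀ r s g)
    {p : ℕ × ℕ} (h1 : p.1 ≤ m + r + 1) (h2 : p.2 ≤ n + s + 1) :
    fsMul x₀ m n f g p = overlay x₀ (f ∘ Prod.map (clampSub m 0) (clampSub n 0))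
      (g ∘ Prod.map (clampSub r (m + 1)) (clampSub s (n + 1))) p := by
  have hF : ¬(p.1 ≤ m ∧ p.2 ≤ n) → (f ∘ Prod.map (clampSub m 0) (clampSub n 0)) p = x₀ := by
    intro hp
    by_cases h : m ≤ p.1
    · exact hf.comp_prodMap_clampSub_fst clampSub_le (.inr (by omega))
    · exact hf.comp_prodMap_clampSub_snd clampSub_le (.inr (by omega))
  have hG : ¬(m + 1 ≤ p.1 ∧ n + 1 ≤ p.2) →
      (g ∘ Prod.map (clampSub r (m + 1)) (clampSub s (n + 1))) p = x₀ := by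
    intro hp
    by_cases h : p.1 ≤ m + 1
    · exact hg.comp_prodMap_clampSub_fst clampSub_le (.inl h)
    · exact hg.comp_prodMap_clampSub_snd clampSub_le (.inl (by omega))
  unfold fsMul
  split_ifs with hA hB
  · rw [overlay_eq_left (hG (by omega))]
    obtain ⟨x, y⟩ := p
    simp only [Function.comp_apply, Prod.map, clampSub] at hA ⊢
    congr 2 <;> omega
  · rw [overlay_eq_right (hF hA)]
    simp only [Function.comp_apply, Prod.map, clampSub]
    congr 2 <;> omega
  · rw [overlay_eq_right (hF hA), hG hB]

theorem faceContigEquiv_fsMul_overlay (hf : IsFaceSphere X x₀ m n f)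
    (hg : IsFaceSphere X x₀ r s g) :
    FaceContigEquiv X x₀ (m + r + 1) (n + s + 1) (fsMul x₀ m n f g)
      (overlay x₀ (f ∘ Prod.map (clampSub m 0) (clampSub n 0))
        (g ∘ Prod.map (clampSub r (m + 1)) (clampSub s (n + 1)))) := by
  have hφ : IsProfile n (n + s + 1) (clampSub n 0) := isProfile_clampSub (by omega)
  have hψ : IsProfile s (n + s + 1) (clampSub s (n + 1)) := isProfile_clampSub (by omega)
  exact faceContigEquiv_symm <| faceContigEquiv_of_eqOn
    (faceContigStep_overlay_of_fst hf hg (by omega) (by omega) hφ hφ hφ.contiguous_self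
      hψ hψ hψ.contiguous_self).1
    fun p h1 h2 => (fsMul_eq_overlay hf hg h1 h2).symm

theorem faceContigEquiv_overlay_fsMul (hf : IsFaceSphere X x₀ m n f)
    (hg : IsFaceSphere X x₀ r s g) :
    FaceContigEquiv X x₀ (m + r + 1) (n + s + 1)
      (overlay x₀ (f ∘ Prod.map (clampSub m (r + 1)) (clampSub n (s + 1)))
        (g ∘ Prod.map (clampSub r 0) (clampSub s 0))) (fsMul x₀ r s g f) := by
  have hφ : IsProfile m (m + r + 1) (clampSub m (r + 1)) := isProfile_clampSub (by omega)
  have hψ : IsProfile r (m + r + 1) (clampSub r 0) := isProfile_clampSub (by omega)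
  refine faceContigEquiv_of_eqOn
    (faceContigStep_overlay_of_snd hf hg (by omega) (by omega) hφ hφ hφ.contiguous_self
      hψ hψ hψ.contiguous_self).1 fun p h1 h2 => ?_
  rw [fsMul_eq_overlay hg hf (by omega) (by omega), overlay_comm_apply]
  rcases le_total p.1 r with h | h
  · exact .inl (hf.comp_prodMap_clampSub_fst clampSub_le (.inl (by omega)))
  · exact .inr (hg.comp_prodMap_clampSub_fst clampSub_le (.inr (by omega)))

end Commutativity

/-- the face group is abelian: `f·g ≈ g·f`. -/
theorem faceGroup_comm {V : Type} [DecidableEq V] (X : ASC V) (x₀ : V)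
    (m n r s : ℕ) (f g : ℕ × ℕ → V)
    (hf : IsFaceSphere X x₀ m n f) (hg : IsFaceSphere X x₀ r s g) :
    ExtContigEquiv X x₀ (m + r + 1) (n + s + 1) (fsMul x₀ m n f g)
      (r + m + 1) (s + n + 1) (fsMul x₀ r s g f) := by
  refine ⟨m + r + 1, n + s + 1, le_rfl, by omega, le_rfl, by omega, ?_⟩
  simp only [Nat.sub_self, show m + r + 1 - (r + m + 1) = 0 by omega,
    show n + s + 1 - (s + n + 1) = 0 by omega, trivExt_zero]
  exact (faceContigEquiv_fsMul_overlay hf hg).trans <|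
    (faceContigEquiv_overlay_exchange_snd hf hg).trans <|
    (faceContigEquiv_overlay_exchange_fst hf hg).trans (faceContigEquiv_overlay_fsMul hf hg)
end

section
/- For based simplicial complexes (X, x₀) and (Y, y₀), the homomorphism ((p₁)_#, (p₂)_#) : F(X × Y, (x₀,y₀)) → F(X, x₀) × F(Y, y₀) induced by the two projections of the categorical product is a group isomorphism. -/
variable {U V W : Type}

/-!
A face sphere in `X × Y` is the same thing as a pair of face spheres of the same size, one in
`X` and one in `Y`, because the product is categorical: pairing of simplicial maps and of
contiguities is coordinatewise. Sizes are matched by trivial extensions, which compose and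
preserve contiguity equivalence, so extension-contiguity equivalence amounts to contiguity
equivalence of all sufficiently large trivial extensions. Two such chains, one in each factor,
are then run one after the other in the product.
-/

section Simplicial

variable {K : ASC U} {L : ASC V} {M : ASC W} [DecidableEq V] [DecidableEq W]

theorem IsSimplicialMap.comp {g : V → W} {f : U → V} (hg : IsSimplicialMap L M g)
    (hf : IsSimplicialMap K L f) : IsSimplicialMap K M (g ∘ f) := fun s hs => by
  simpa only [Finset.image_image] using hg _ (hf s hs)

theorem IsSimplicialMap.contiguous {f : U → V} (hf : IsSimplicialMap K L f) :
    Contiguous K L f f := fun s hs => by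
  simpa only [Finset.union_self] using hf s hs

theorem Contiguous.comp {f g : V → W} {φ : U → V} (hfg : Contiguous L M f g)
    (hφ : IsSimplicialMap K L φ) : Contiguous K M (f ∘ φ) (g ∘ φ) := fun s hs => by
  simpa only [Finset.image_image] using hfg _ (hφ s hs)

theorem Contiguous.map {f g : U → V} {ψ : V → W} (hψ : IsSimplicialMap L M ψ)
    (hfg : Contiguous K L f g) : Contiguous K M (ψ ∘ f) (ψ ∘ g) := fun s hs => by
  simpa only [Finset.image_union, Finset.image_image] using hψ _ (hfg s hs)

end Simplicial

section Product

variable {K : ASC U} {X : ASC V} {Y : ASC W} [DecidableEq V] [DecidableEq W]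

theorem ASC.isSimplicialMap_fst : IsSimplicialMap (X.prod Y) X Prod.fst := fun _ hs => hs.1

theorem ASC.isSimplicialMap_snd : IsSimplicialMap (X.prod Y) Y Prod.snd := fun _ hs => hs.2

theorem IsSimplicialMap.prodMk {f : U → V} {g : U → W} (hf : IsSimplicialMap K X f)
    (hg : IsSimplicialMap K Y g) : IsSimplicialMap K (X.prod Y) (fun p => (f p, g p)) :=
  fun s hs => by
    constructor <;> rw [Finset.image_image]
    exacts [hf s hs, hg s hs]

theorem Contiguous.prodMk {f f' : U → V} {g g' : U → W} (hf : Contiguous K X f f')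
    (hg : Contiguous K Y g g') :
    Contiguous K (X.prod Y) (fun p => (f p, g p)) (fun p => (f' p, g' p)) := fun s hs => by
  constructor <;> rw [Finset.image_union, Finset.image_image, Finset.image_image]
  exacts [hf s hs, hg s hs]

theorem IsSimplicialMap.prodMap {U₁ U₂ V₁ V₂ : Type} [DecidableEq U₁] [DecidableEq U₂]
    [DecidableEq V₁] [DecidableEq V₂] {K₁ : ASC U₁} {K₂ : ASC U₂} {L₁ : ASC V₁} {L₂ : ASC V₂}
    {f : U₁ → V₁} {g : U₂ → V₂} (hf : IsSimplicialMap K₁ L₁ f) (hg : IsSimplicialMap K₂ L₂ g) :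
    IsSimplicialMap (K₁.prod K₂) (L₁.prod L₂) (Prod.map f g) :=
  (hf.comp ASC.isSimplicialMap_fst).prodMk (hg.comp ASC.isSimplicialMap_snd)

end Product

theorem comp_fsMul (φ : V → W) (x₀ : V) (m n : ℕ) (f g : ℕ × ℕ → V) :
    φ ∘ fsMul x₀ m n f g = fsMul (φ x₀) m n (φ ∘ f) (φ ∘ g) := by
  funext p
  simp only [Function.comp_apply, fsMul, apply_ite φ]

section InducedMap

variable [DecidableEq V] [DecidableEq W] {X : ASC V} {Y : ASC W} {x₀ : V} {φ : V → W}
  {m n : ℕ}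

theorem IsFaceSphere.map (hφ : IsSimplicialMap X Y φ) {f : ℕ × ℕ → V}
    (hf : IsFaceSphere X x₀ m n f) : IsFaceSphere Y (φ x₀) m n (φ ∘ f) :=
  ⟨hφ.comp hf.1, fun p h1 h2 h3 => congrArg φ (hf.2 p h1 h2 h3)⟩

theorem FaceContigEquiv.map (hφ : IsSimplicialMap X Y φ) {f g : ℕ × ℕ → V}
    (h : FaceContigEquiv X x₀ m n f g) : FaceContigEquiv Y (φ x₀) m n (φ ∘ f) (φ ∘ g) :=
  Relation.ReflTransGen.lift (φ ∘ ·)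
    (fun _ _ ⟨ha, hb, hab⟩ => ⟨ha.map hφ, hb.map hφ, hab.map hφ⟩) _ _ h

theorem ExtContigEquiv.map (hφ : IsSimplicialMap X Y φ) {m' n' : ℕ} {f g : ℕ × ℕ → V}
    (h : ExtContigEquiv X x₀ m n f m' n' g) :
    ExtContigEquiv Y (φ x₀) m n (φ ∘ f) m' n' (φ ∘ g) :=
  let ⟨M, N, h1, h2, h3, h4, hc⟩ := h
  ⟨M, N, h1, h2, h3, h4, hc.map hφ⟩

end InducedMap

section TrivialExtension

theorem alpha_iterate_apply (m r x : ℕ) : (alpha m)^[r] x = max (min x m) (x - r) := by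
  induction r with
  | zero => simp only [Function.iterate_zero, id_eq]; omega
  | succ r ih =>
    rw [Function.iterate_succ_apply', ih, alpha]
    split_ifs <;> omega

theorem isSimplicialMap_alpha_iterate {m M : ℕ} (h : m ≤ M) :
    IsSimplicialMap (interval M) (interval m) ((alpha m)^[M - m]) := by
  rintro s ⟨hle, hadj⟩
  constructor
  · simp only [Finset.forall_mem_image, alpha_iterate_apply]
    intro x hx
    have := hle x hx
    omega
  · simp only [Finset.forall_mem_image, alpha_iterate_apply]
    intro x hx y hy
    have := hadj x hx y hy
    have := hle x hx
    have := hle y hy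
    omega

theorem trivExt_trivExt {m n M₁ N₁ M N : ℕ} (f : ℕ × ℕ → V) (hm : m ≤ M₁) (hM : M₁ ≤ M)
    (hn : n ≤ N₁) (hN : N₁ ≤ N) :
    trivExt M₁ N₁ (M - M₁) (N - N₁) (trivExt m n (M₁ - m) (N₁ - n) f) =
      trivExt m n (M - m) (N - n) f := by
  funext p
  simp only [trivExt, Function.comp_apply, Prod.map, alpha_iterate_apply]
  congr 2 <;> omega

variable [DecidableEq V] {X : ASC V} {x₀ : V} {m n M N : ℕ}

theorem IsFaceSphere.trivExt {f : ℕ × ℕ → V} (hf : IsFaceSphere X x₀ m n f) (hm : m ≤ M)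
    (hn : n ≤ N) : IsFaceSphere X x₀ M N (trivExt m n (M - m) (N - n) f) := by
  refine ⟨hf.1.comp ((isSimplicialMap_alpha_iterate hm).prodMap
    (isSimplicialMap_alpha_iterate hn)), fun p h1 h2 h3 => hf.2 _ ?_ ?_ ?_⟩
  all_goals simp only [Prod.map, alpha_iterate_apply]; omega

theorem FaceContigEquiv.trivExt {f g : ℕ × ℕ → V} (hm : m ≤ M) (hn : n ≤ N)
    (h : FaceContigEquiv X x₀ m n f g) :
    FaceContigEquiv X x₀ M N (trivExt m n (M - m) (N - n) f)
      (trivExt m n (M - m) (N - n) g) := by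
  refine Relation.ReflTransGen.lift (_root_.trivExt m n (M - m) (N - n)) ?_ _ _ h
  rintro a b ⟨ha, hb, hab⟩
  exact ⟨ha.trivExt hm hn, hb.trivExt hm hn,
    hab.comp ((isSimplicialMap_alpha_iterate hm).prodMap (isSimplicialMap_alpha_iterate hn))⟩

theorem extContigEquiv_iff_eventually {m' n' : ℕ} {f g : ℕ × ℕ → V} :
    ExtContigEquiv X x₀ m n f m' n' g ↔ ∀ᶠ P : ℕ × ℕ in Filter.atTop,
      FaceContigEquiv X x₀ P.1 P.2 (trivExt m n (P.1 - m) (P.2 - n) f)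
        (trivExt m' n' (P.1 - m') (P.2 - n') g) := by
  constructor
  · rintro ⟨M₀, N₀, h1, h2, h3, h4, hc⟩
    filter_upwards [Filter.eventually_ge_atTop (M₀, N₀)] with P ⟨hM, hN⟩
    have := hc.trivExt hM hN
    rwa [trivExt_trivExt f h1 hM h3 hN, trivExt_trivExt g h2 hM h4 hN] at this
  · intro h
    obtain ⟨P, ⟨hm, hn⟩, hc⟩ :=
      ((Filter.eventually_ge_atTop (max m m', max n n')).and h).exists
    exact ⟨P.1, P.2, le_of_max_le_left hm, le_of_max_le_right hm, le_of_max_le_left hn,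
      le_of_max_le_right hn, hc⟩

theorem extContigEquiv_trivExt {f : ℕ × ℕ → V} (hm : m ≤ M) (hn : n ≤ N) :
    ExtContigEquiv X x₀ M N (trivExt m n (M - m) (N - n) f) m n f := by
  refine ⟨M, N, le_rfl, hm, le_rfl, hn, ?_⟩
  rw [Nat.sub_self, Nat.sub_self]
  exact .refl

end TrivialExtension

section Pairing

variable [DecidableEq V] [DecidableEq W] {X : ASC V} {Y : ASC W} {x₀ : V} {y₀ : W}
  {m n m' n' : ℕ}

theorem IsFaceSphere.prodMk {f : ℕ × ℕ → V} {g : ℕ × ℕ → W} (hf : IsFaceSphere X x₀ m n f)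
    (hg : IsFaceSphere Y y₀ m n g) :
    IsFaceSphere (X.prod Y) (x₀, y₀) m n (fun p => (f p, g p)) :=
  ⟨hf.1.prodMk hg.1, fun p h1 h2 h3 => Prod.ext (hf.2 p h1 h2 h3) (hg.2 p h1 h2 h3)⟩

theorem FaceContigEquiv.prodMk {f f' : ℕ × ℕ → V} {g g' : ℕ × ℕ → W}
    (hf' : IsFaceSphere X x₀ m n f') (hg : IsFaceSphere Y y₀ m n g)
    (hff' : FaceContigEquiv X x₀ m n f f') (hgg' : FaceContigEquiv Y y₀ m n g g') :
    FaceContigEquiv (X.prod Y) (x₀, y₀) m n (fun p => (f p, g p)) (fun p => (f' p, g' p)) := by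
  have moveFst : FaceContigEquiv (X.prod Y) (x₀, y₀) m n (fun p => (f p, g p))
      (fun p => (f' p, g p)) := by
    refine Relation.ReflTransGen.lift (fun a p => (a p, g p)) ?_ _ _ hff'
    rintro a b ⟨ha, hb, hab⟩
    exact ⟨ha.prodMk hg, hb.prodMk hg, hab.prodMk hg.1.contiguous⟩
  have moveSnd : FaceContigEquiv (X.prod Y) (x₀, y₀) m n (fun p => (f' p, g p))
      (fun p => (f' p, g' p)) := by
    refine Relation.ReflTransGen.lift (fun b p => (f' p, b p)) ?_ _ _ hgg'
    rintro a b ⟨ha, hb, hab⟩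
    exact ⟨hf'.prodMk ha, hf'.prodMk hb, hf'.1.contiguous.prodMk hab⟩
  exact moveFst.trans moveSnd

theorem ExtContigEquiv.prodMk {f f' : ℕ × ℕ → V} {g g' : ℕ × ℕ → W}
    (hf' : IsFaceSphere X x₀ m' n' f') (hg : IsFaceSphere Y y₀ m n g)
    (hff' : ExtContigEquiv X x₀ m n f m' n' f') (hgg' : ExtContigEquiv Y y₀ m n g m' n' g') :
    ExtContigEquiv (X.prod Y) (x₀, y₀) m n (fun p => (f p, g p)) m' n'
      (fun p => (f' p, g' p)) := by
  rw [extContigEquiv_iff_eventually] at hff' hgg' ⊢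
  filter_upwards [Filter.eventually_ge_atTop (max m m', max n n'), hff', hgg'] with
    P ⟨hm, hn⟩ hfP hgP
  exact hfP.prodMk (hf'.trivExt (le_of_max_le_right hm) (le_of_max_le_right hn))
    (hg.trivExt (le_of_max_le_left hm) (le_of_max_le_left hn)) hgP

end Pairing

/-- the projections induce an isomorphism
`F(X × Y, (x₀,y₀)) ≅ F(X, x₀) × F(Y, y₀)`: the induced map is a homomorphism
(projections of face spheres are face spheres and of products are products),
and it is surjective and injective on equivalence classes. -/
theorem faceGroup_prod_iso {V W : Type} [DecidableEq V] [DecidableEq W]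
    (X : ASC V) (Y : ASC W) (x₀ : V) (y₀ : W) :
    -- projections send face spheres to face spheres
    (∀ (m n : ℕ) (h : ℕ × ℕ → V × W), IsFaceSphere (X.prod Y) (x₀, y₀) m n h →
      IsFaceSphere X x₀ m n (Prod.fst ∘ h) ∧ IsFaceSphere Y y₀ m n (Prod.snd ∘ h)) ∧
    -- the induced map is well defined on classes
    (∀ (m n m' n' : ℕ) (h h' : ℕ × ℕ → V × W),
      ExtContigEquiv (X.prod Y) (x₀, y₀) m n h m' n' h' →
      ExtContigEquiv X x₀ m n (Prod.fst ∘ h) m' n' (Prod.fst ∘ h') ∧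
      ExtContigEquiv Y y₀ m n (Prod.snd ∘ h) m' n' (Prod.snd ∘ h')) ∧
    -- the induced map is multiplicative
    (∀ (m n : ℕ) (h k : ℕ × ℕ → V × W),
      Prod.fst ∘ fsMul (x₀, y₀) m n h k = fsMul x₀ m n (Prod.fst ∘ h) (Prod.fst ∘ k) ∧
      Prod.snd ∘ fsMul (x₀, y₀) m n h k = fsMul y₀ m n (Prod.snd ∘ h) (Prod.snd ∘ k)) ∧
    -- surjectivity
    (∀ (m n : ℕ) (f : ℕ × ℕ → V), IsFaceSphere X x₀ m n f →
      ∀ (r s : ℕ) (g : ℕ × ℕ → W), IsFaceSphere Y y₀ r s g →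
      ∃ (M N : ℕ) (h : ℕ × ℕ → V × W), IsFaceSphere (X.prod Y) (x₀, y₀) M N h ∧
        ExtContigEquiv X x₀ M N (Prod.fst ∘ h) m n f ∧
        ExtContigEquiv Y y₀ M N (Prod.snd ∘ h) r s g) ∧
    -- injectivity
    (∀ (m n m' n' : ℕ) (h h' : ℕ × ℕ → V × W),
      IsFaceSphere (X.prod Y) (x₀, y₀) m n h →
      IsFaceSphere (X.prod Y) (x₀, y₀) m' n' h' →
      ExtContigEquiv X x₀ m n (Prod.fst ∘ h) m' n' (Prod.fst ∘ h') →
      ExtContigEquiv Y y₀ m n (Prod.snd ∘ h) m' n' (Prod.snd ∘ h') →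
      ExtContigEquiv (X.prod Y) (x₀, y₀) m n h m' n' h') := by
  refine ⟨fun m n h hh => ⟨hh.map ASC.isSimplicialMap_fst, hh.map ASC.isSimplicialMap_snd⟩,
    fun m n m' n' h h' hhh' => ⟨hhh'.map ASC.isSimplicialMap_fst,
      hhh'.map ASC.isSimplicialMap_snd⟩,
    fun m n h k => ⟨comp_fsMul _ _ _ _ _ _, comp_fsMul _ _ _ _ _ _⟩, ?_, ?_⟩
  · intro m n f hf r s g hg
    have hM := le_max_left m r
    have hN := le_max_left n s
    have hM' := le_max_right m r
    have hN' := le_max_right n s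
    exact ⟨max m r, max n s, _, (hf.trivExt hM hN).prodMk (hg.trivExt hM' hN'),
      extContigEquiv_trivExt hM hN, extContigEquiv_trivExt hM' hN'⟩
  · intro m n m' n' h h' hh hh' hfst hsnd
    exact ExtContigEquiv.prodMk (hh'.map ASC.isSimplicialMap_fst)
      (hh.map ASC.isSimplicialMap_snd) hfst hsnd
end
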